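/- arXiv:1804.05229 — 7 statements merged into one kernel-verified Lean document; each statement's English description precedes it below -/
import Mathlib

section
/- Let V be a real vector space, p and q positive integers, σ = (p + √(p² + 4q))/2 the metallic number, and F : V → V a linear map with F² = id (an almost product structure). Then both linear maps J± = (p/2)·id ± ((2σ − p)/2)·F satisfy J±² = p·J± + q·id, i.e. each is a metallic structure on V. -/
/-- An almost product structure `F` (`F² = id`) on a real vector space induces
two metallic structures `J± = (p/2)·id ± ((2σ − p)/2)·F`, where `σ = (p + √(p² + 4q))/2`
is the metallic number: each satisfies `J±² = p·J± + q·id`. -/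
theorem almostProduct_induces_metallic {V : Type*} [AddCommGroup V] [Module ℝ V]
    (p q : ℕ) (hp : 0 < p) (hq : 0 < q)
    (F : V →ₗ[ℝ] V) (hF : ∀ x : V, F (F x) = x)
    (σ : ℝ) (hσ : σ = ((p : ℝ) + Real.sqrt ((p : ℝ) ^ 2 + 4 * (q : ℝ))) / 2)
    (ε : ℝ) (hε : ε = 1 ∨ ε = -1)
    (J : V →ₗ[ℝ] V)
    (hJ : J = ((p : ℝ) / 2) • (LinearMap.id : V →ₗ[ℝ] V) + (ε * ((2 * σ - p) / 2)) • F) :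
    ∀ x : V, J (J x) = (p : ℝ) • J x + (q : ℝ) • x := by
  intro x
  set c : ℝ := ε * ((2 * σ - p) / 2) with hc
  have hsq : Real.sqrt ((p : ℝ) ^ 2 + 4 * (q : ℝ)) ^ 2 = (p : ℝ) ^ 2 + 4 * (q : ℝ) :=
    Real.sq_sqrt (by positivity)
  have hε2 : ε ^ 2 = 1 := by rcases hε with h | h <;> simp [h]
  have hc2 : c ^ 2 = ((p : ℝ) ^ 2 + 4 * q) / 4 := by
    have : (2 * σ - p) = Real.sqrt ((p : ℝ) ^ 2 + 4 * (q : ℝ)) := by rw [hσ]; ring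
    rw [hc, mul_pow, hε2, one_mul, div_pow, this, hsq]; ring
  have hJx : ∀ y : V, J y = ((p : ℝ) / 2) • y + c • F y := by
    intro y; rw [hJ]; simp
  rw [hJx, hJx]
  simp only [map_add, map_smul, hF, smul_add, smul_smul]
  have h1 : (p : ℝ) / 2 * ((p : ℝ) / 2) + c * c = (p : ℝ) * ((p : ℝ) / 2) + q := by
    have := hc2; nlinarith [hc2]
  have h2 : (p : ℝ) / 2 * c + c * ((p : ℝ) / 2) = (p : ℝ) * c := by ring
  match_scalars <;> nlinarith [h1, h2]
end

section
/- Let V be a finite-dimensional real inner product space, p and q positive integers, and J : V → V a linear map with J² = p·J + q·id that is self-adjoint: ⟨J x, y⟩ = ⟨x, J y⟩ for all x, y ∈ V. Let W ⊆ V be a subspace, P the orthogonal projection onto W, and define T x = P(J x), N x = (id − P)(J x) for x ∈ W and t u = P(J u) for u ∈ W⊥. Then for every x ∈ W: T(T x) = p·T x + q·x − t(N x). -/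
open RealInnerProductSpace

theorem LinearMap.compression_sq_apply_of_sq_eq {R M : Type*} [CommRing R] [AddCommGroup M]
    [Module R M] (P J : M →ₗ[R] M) (a b : R) (hJ2 : ∀ x, J (J x) = a • J x + b • x) {x : M}
    (hx : P x = x) :
    P (J (P (J x))) = a • P (J x) + b • x - P (J (J x - P (J x))) := by
  rw [map_sub J, map_sub P, hJ2, map_add, map_smul, map_smul, hx, sub_sub_cancel]

theorem T_squared_formula_general {V : Type*} [NormedAddCommGroup V] [InnerProductSpace ℝ V]
    [FiniteDimensional ℝ V]
    (p q : ℕ) (J : V →ₗ[ℝ] V)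
    (hJ2 : ∀ x : V, J (J x) = (p : ℝ) • J x + (q : ℝ) • x)
    (W : Submodule ℝ V)
    (T : V → V) (hT : ∀ x : V, T x = (W.orthogonalProjectionOnto (J x) : V))
    (N : V → V) (hN : ∀ x : V, N x = J x - (W.orthogonalProjectionOnto (J x) : V))
    (t : V → V) (ht : ∀ u : V, t u = (W.orthogonalProjectionOnto (J u) : V)) :
    ∀ x ∈ W, T (T x) = (p : ℝ) • T x + (q : ℝ) • x - t (N x) := by
  intro x hx
  simp only [hT, hN, ht, ← W.starProjection_apply]
  exact (W.starProjection : V →ₗ[ℝ] V).compression_sq_apply_of_sq_eq J _ _ hJ2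
    (W.starProjection_eq_self_iff.mpr hx)

/-- With `T x = P(J x)`, `N x = (id − P)(J x)` for `x ∈ W` and `t u = P(J u)`
for `u ∈ W⊥`, one has `T(T x) = p·T x + q·x − t(N x)` for every `x ∈ W`. -/
theorem T_squared_formula {V : Type*} [NormedAddCommGroup V] [InnerProductSpace ℝ V]
    [FiniteDimensional ℝ V]
    (p q : ℕ) (hp : 0 < p) (hq : 0 < q) (J : V →ₗ[ℝ] V)
    (hJ2 : ∀ x : V, J (J x) = (p : ℝ) • J x + (q : ℝ) • x)
    (hsym : ∀ x y : V, ⟪J x, y⟫ = ⟪x, J y⟫)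
    (W : Submodule ℝ V)
    (T : V → V) (hT : ∀ x : V, T x = (W.orthogonalProjectionOnto (J x) : V))
    (N : V → V) (hN : ∀ x : V, N x = J x - (W.orthogonalProjectionOnto (J x) : V))
    (t : V → V) (ht : ∀ u : V, t u = (W.orthogonalProjectionOnto (J u) : V)) :
    ∀ x ∈ W, T (T x) = (p : ℝ) • T x + (q : ℝ) • x - t (N x) :=
  T_squared_formula_general p q J hJ2 W T hT N hN t ht
end

section
/- Let V be a finite-dimensional real inner product space, p and q positive integers, and J : V → V a linear map with J² = p·J + q·id that is self-adjoint: ⟨J x, y⟩ = ⟨x, J y⟩ for all x, y ∈ V. Let W ⊆ V be a subspace, P the orthogonal projection onto W, and define T x = P(J x), N x = (id − P)(J x) for x ∈ W and n u = (id − P)(J u) for u ∈ W⊥. Then for every x ∈ W: p·N x = N(T x) + n(N x). -/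
open RealInnerProductSpace

/-! Since `n = N` and `T x + N x = J x`, the right-hand side is `(id − P)(J² x)
= (id − P)(p J x + q x) = p N x`, because `(id − P) x = 0` for `x ∈ W`. -/

theorem LinearMap.apply_apply_apply_of_sq_eq {R M : Type*} [Semiring R] [AddCommMonoid M]
    [Module R M] {J Q : M →ₗ[R] M} {a b : R} (hJ : ∀ y, J (J y) = a • J y + b • y) {x : M}
    (hx : Q x = 0) : Q (J (J x)) = a • Q (J x) := by
  rw [hJ, map_add, map_smul, map_smul, hx, smul_zero, add_zero]

theorem N_formula_general {V : Type*} [NormedAddCommGroup V] [InnerProductSpace ℝ V]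
    [FiniteDimensional ℝ V]
    (p q : ℕ) (J : V →ₗ[ℝ] V)
    (hJ2 : ∀ x : V, J (J x) = (p : ℝ) • J x + (q : ℝ) • x)
    (W : Submodule ℝ V)
    (T : V → V) (hT : ∀ x : V, T x = (Submodule.orthogonalProjectionOnto W (J x) : V))
    (N : V → V) (hN : ∀ x : V, N x = J x - (Submodule.orthogonalProjectionOnto W (J x) : V))
    (n : V → V) (hn : ∀ u : V, n u = J u - (Submodule.orthogonalProjectionOnto W (J u) : V)) :
    ∀ x ∈ W, (p : ℝ) • N x = N (T x) + n (N x) := by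
  intro x hx
  set Q : V →ₗ[ℝ] V := LinearMap.id - (W.starProjection : V →ₗ[ℝ] V)
  have hNQ : ∀ y, N y = Q (J y) := fun y => by
    simp [Q, hN, Submodule.coe_orthogonalProjectionOnto_apply]
  have hnN : n = N := funext fun u => by rw [hn, hN]
  have hQx : Q x = 0 := by simp [Q, Submodule.starProjection_eq_self_iff.mpr hx]
  have hsplit : T x + N x = J x := by rw [hT, hN, add_sub_cancel]
  calc (p : ℝ) • N x = Q (J (J x)) := by
        rw [hNQ, LinearMap.apply_apply_apply_of_sq_eq hJ2 hQx]
    _ = N (T x) + n (N x) := by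
        rw [hnN, hNQ (T x), hNQ (N x), ← map_add, ← map_add, hsplit]

/-- With `T x = P(J x)`, `N x = (id − P)(J x)` for `x ∈ W` and
`n u = (id − P)(J u)` for `u ∈ W⊥`, one has `p·N x = N(T x) + n(N x)` for every `x ∈ W`. -/
theorem N_formula {V : Type*} [NormedAddCommGroup V] [InnerProductSpace ℝ V]
    [FiniteDimensional ℝ V]
    (p q : ℕ) (hp : 0 < p) (hq : 0 < q) (J : V →ₗ[ℝ] V)
    (hJ2 : ∀ x : V, J (J x) = (p : ℝ) • J x + (q : ℝ) • x)
    (hsym : ∀ x y : V, ⟪J x, y⟫ = ⟪x, J y⟫)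
    (W : Submodule ℝ V)
    (T : V → V) (hT : ∀ x : V, T x = (Submodule.orthogonalProjectionOnto W (J x) : V))
    (N : V → V) (hN : ∀ x : V, N x = J x - (Submodule.orthogonalProjectionOnto W (J x) : V))
    (n : V → V) (hn : ∀ u : V, n u = J u - (Submodule.orthogonalProjectionOnto W (J u) : V)) :
    ∀ x ∈ W, (p : ℝ) • N x = N (T x) + n (N x) :=
  N_formula_general p q J hJ2 W T hT N hN n hn
end

section
/- Let V be a finite-dimensional real inner product space, p and q positive integers, and J : V → V a linear map with J² = p·J + q·id that is self-adjoint: ⟨J x, y⟩ = ⟨x, J y⟩ for all x, y ∈ V. Let W ⊆ V be a subspace, P the orthogonal projection onto W, and define N x = (id − P)(J x) for x ∈ W and t u = P(J u), n u = (id − P)(J u) for u ∈ W⊥. Then for every u ∈ W⊥: n(n u) = p·n u + q·u − N(t u). -/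
open RealInnerProductSpace

section NormalPart

variable {R M : Type*} [Ring R] [AddCommGroup M] [Module R M]

/-- For `P` the projection onto the tangent space, this is both `N` and `n` of the paper. -/
def normalPart (P J : M →ₗ[R] M) : M →ₗ[R] M := J - P ∘ₗ J

theorem normalPart_apply (P J : M →ₗ[R] M) (x : M) : normalPart P J x = J x - P (J x) := rfl

theorem normalPart_normalPart_apply (P J : M →ₗ[R] M) (a b : R) {u : M}
    (hJ : J (J u) = a • J u + b • u) (hu : P u = 0) :
    normalPart P J (normalPart P J u) =
      a • normalPart P J u + b • u - normalPart P J (P (J u)) := by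
  have hJu : normalPart P J (J u) = a • normalPart P J u + b • u := by
    simp only [normalPart_apply, hJ, map_add, map_smul, hu, smul_zero, add_zero, smul_sub]
    abel
  calc normalPart P J (normalPart P J u)
      = normalPart P J (J u) - normalPart P J (P (J u)) := by
        rw [normalPart_apply P J u, map_sub]
    _ = a • normalPart P J u + b • u - normalPart P J (P (J u)) := by rw [hJu]

end NormalPart

theorem n_squared_formula_general {V : Type*} [NormedAddCommGroup V] [InnerProductSpace ℝ V]
    [FiniteDimensional ℝ V]
    (p q : ℕ) (J : V →ₗ[ℝ] V)
    (hJ2 : ∀ x : V, J (J x) = (p : ℝ) • J x + (q : ℝ) • x)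
    (W : Submodule ℝ V)
    (N : V → V) (hN : ∀ x : V, N x = J x - (W.orthogonalProjectionOnto (J x) : V))
    (t : V → V) (ht : ∀ u : V, t u = (W.orthogonalProjectionOnto (J u) : V))
    (n : V → V) (hn : ∀ u : V, n u = J u - (W.orthogonalProjectionOnto (J u) : V)) :
    ∀ u ∈ Wᗮ, n (n u) = (p : ℝ) • n u + (q : ℝ) • u - N (t u) := by
  intro u hu
  set P : V →ₗ[ℝ] V := W.starProjection.toLinearMap
  have hNP : N = normalPart P J := funext fun x ↦ hN x
  have hnP : n = normalPart P J := funext fun x ↦ hn x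
  have hPu : P u = 0 := W.starProjection_apply_eq_zero_iff.mpr hu
  rw [hNP, hnP, ht]
  exact normalPart_normalPart_apply P J _ _ (hJ2 u) hPu

/-- With `N x = (id − P)(J x)` for `x ∈ W` and `t u = P(J u)`,
`n u = (id − P)(J u)` for `u ∈ W⊥`, one has `n(n u) = p·n u + q·u − N(t u)` for every
`u ∈ W⊥`. -/
theorem n_squared_formula {V : Type*} [NormedAddCommGroup V] [InnerProductSpace ℝ V]
    [FiniteDimensional ℝ V]
    (p q : ℕ) (hp : 0 < p) (hq : 0 < q) (J : V →ₗ[ℝ] V)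
    (hJ2 : ∀ x : V, J (J x) = (p : ℝ) • J x + (q : ℝ) • x)
    (hsym : ∀ x y : V, ⟪J x, y⟫ = ⟪x, J y⟫)
    (W : Submodule ℝ V)
    (N : V → V) (hN : ∀ x : V, N x = J x - (W.orthogonalProjectionOnto (J x) : V))
    (t : V → V) (ht : ∀ u : V, t u = (W.orthogonalProjectionOnto (J u) : V))
    (n : V → V) (hn : ∀ u : V, n u = J u - (W.orthogonalProjectionOnto (J u) : V)) :
    ∀ u ∈ Wᗮ, n (n u) = (p : ℝ) • n u + (q : ℝ) • u - N (t u) :=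
  n_squared_formula_general p q J hJ2 W N hN t ht n hn
end

section
/- Let V be a finite-dimensional real inner product space, p and q positive integers, and J : V → V a linear map with J² = p·J + q·id that is self-adjoint: ⟨J x, y⟩ = ⟨x, J y⟩ for all x, y ∈ V. Let W ⊆ V be a subspace with orthogonal projection P, and set N x = (id − P)(J x). Let D and D' be subspaces of W that are mutually orthogonal and such that J z ∈ W⊥ for every z ∈ D' (D' is anti-invariant). Then ⟨N x, N z⟩ = 0 for every x ∈ D and every z ∈ D'; that is, N(D) and N(D') are mutually perpendicular subspaces of W⊥. -/
open RealInnerProductSpace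

/-! Since `J z` is normal, `N z = J z` and the tangential part of `J x` drops out of
`⟪N x, J z⟫`. Self-adjointness and the metallic relation then give
`⟪J x, J z⟫ = ⟪x, J (J z)⟫ = p ⟪x, J z⟫ + q ⟪x, z⟫`, and both terms vanish: `x ∈ W` is
orthogonal to `J z ∈ Wᗮ`, and to `z ∈ D'`. -/

theorem LinearMap.inner_map_map_of_sq_eq {V : Type*} [NormedAddCommGroup V]
    [InnerProductSpace ℝ V] {J : V →ₗ[ℝ] V} {a b : ℝ}
    (hJ2 : ∀ x : V, J (J x) = a • J x + b • x) (hsym : ∀ x y : V, ⟪J x, y⟫ = ⟪x, J y⟫)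
    (x z : V) : ⟪J x, J z⟫ = a * ⟪x, J z⟫ + b * ⟪x, z⟫ := by
  rw [hsym, hJ2, inner_add_right, inner_smul_right, inner_smul_right]

theorem Submodule.inner_sub_orthogonalProjectionOnto_of_mem_orthogonal {𝕜 E : Type*} [RCLike 𝕜]
    [NormedAddCommGroup E] [InnerProductSpace 𝕜 E] {K : Submodule 𝕜 E}
    [K.HasOrthogonalProjection] (v : E) {w : E} (hw : w ∈ Kᗮ) :
    inner 𝕜 (v - K.orthogonalProjectionOnto v) w = inner 𝕜 v w := by
  rw [inner_sub_left, K.inner_right_of_mem_orthogonal (K.orthogonalProjectionOnto v).2 hw,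
    sub_zero]

theorem normal_parts_perpendicular_general {V : Type*} [NormedAddCommGroup V] [InnerProductSpace ℝ V]
    [FiniteDimensional ℝ V]
    (p q : ℕ) (J : V →ₗ[ℝ] V)
    (hJ2 : ∀ x : V, J (J x) = (p : ℝ) • J x + (q : ℝ) • x)
    (hsym : ∀ x y : V, ⟪J x, y⟫ = ⟪x, J y⟫)
    (W : Submodule ℝ V)
    (N : V → V) (hN : ∀ x : V, N x = J x - (W.orthogonalProjection (J x) : V))
    (D D' : Submodule ℝ V) (hD : D ≤ W)
    (horth : ∀ x ∈ D, ∀ z ∈ D', ⟪x, z⟫ = 0)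
    (hanti : ∀ z ∈ D', J z ∈ Wᗮ) :
    ∀ x ∈ D, ∀ z ∈ D', ⟪N x, N z⟫ = 0 := by
  intro x hx z hz
  have hJz : J z ∈ Wᗮ := hanti z hz
  have hNz : N z = J z := by
    rw [hN, W.orthogonalProjectionOnto_eq_zero_iff.mpr hJz, Submodule.coe_zero, sub_zero]
  rw [hNz, hN, W.inner_sub_orthogonalProjectionOnto_of_mem_orthogonal _ hJz,
    J.inner_map_map_of_sq_eq hJ2 hsym, W.inner_right_of_mem_orthogonal (hD hx) hJz,
    horth x hx z hz, mul_zero, mul_zero, add_zero]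

/-- For a hemi-slant model, with `D, D' ⊆ W` mutually orthogonal and `D'`
anti-invariant (`J z ∈ W⊥` for `z ∈ D'`), the normal parts satisfy `⟪N x, N z⟫ = 0` for all
`x ∈ D`, `z ∈ D'`: the subspaces `N(D)` and `N(D')` of `W⊥` are mutually perpendicular. -/
theorem normal_parts_perpendicular {V : Type*} [NormedAddCommGroup V] [InnerProductSpace ℝ V]
    [FiniteDimensional ℝ V]
    (p q : ℕ) (hp : 0 < p) (hq : 0 < q) (J : V →ₗ[ℝ] V)
    (hJ2 : ∀ x : V, J (J x) = (p : ℝ) • J x + (q : ℝ) • x)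
    (hsym : ∀ x y : V, ⟪J x, y⟫ = ⟪x, J y⟫)
    (W : Submodule ℝ V)
    (N : V → V) (hN : ∀ x : V, N x = J x - (W.orthogonalProjection (J x) : V))
    (D D' : Submodule ℝ V) (hD : D ≤ W) (hD' : D' ≤ W)
    (horth : ∀ x ∈ D, ∀ z ∈ D', ⟪x, z⟫ = 0)
    (hanti : ∀ z ∈ D', J z ∈ Wᗮ) :
    ∀ x ∈ D, ∀ z ∈ D', ⟪N x, N z⟫ = 0 :=
  normal_parts_perpendicular_general p q J hJ2 hsym W N hN D D' hD horth hanti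
end

section
/- Let V be a finite-dimensional real inner product space, p and q positive integers, and J : V → V a linear map with J² = p·J + q·id that is self-adjoint: ⟨J x, y⟩ = ⟨x, J y⟩ for all x, y ∈ V. Let W ⊆ V be a subspace with orthogonal projection P, set T x = P(J x), and let D ⊆ W be a subspace that is slant with angle θ, i.e. ‖T x‖² = cos²θ · ‖J x‖² for every x ∈ D. Then for all x, y ∈ D: ⟨T x, T y⟩ = cos²θ · ( p·⟨T x, y⟩ + q·⟨x, y⟩ ). -/
/-!
Orthogonal projection onto `W` does not change inner products with vectors of `W`, so on `D` the
form `⟪T x, y⟫ = ⟪J x, y⟫` is symmetric, and `J² = pJ + q` turns the slant condition into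
`⟪T x, T x⟫ = cos²θ (p ⟪T x, x⟫ + q ⟪x, x⟫)`. Both sides are symmetric bilinear forms on `D`,
so polarization gives the identity for all `x, y ∈ D`.
-/

open RealInnerProductSpace

section

variable {V : Type*} [NormedAddCommGroup V] [InnerProductSpace ℝ V]

theorem Submodule.inner_starProjection_left_of_mem (K : Submodule ℝ V)
    [K.HasOrthogonalProjection] {y : V} (hy : y ∈ K) (v : V) :
    ⟪K.starProjection v, y⟫ = ⟪v, y⟫ := by
  rw [K.inner_starProjection_left_eq_right, K.starProjection_eq_self_iff.mpr hy]

namespace LinearMap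

theorem IsSymmetric.norm_apply_sq_eq_of_apply_apply_eq {J : V →ₗ[ℝ] V} (hJ : J.IsSymmetric)
    {a b : ℝ} (hJ2 : ∀ x, J (J x) = a • J x + b • x) (x : V) :
    ‖J x‖ ^ 2 = a * ⟪J x, x⟫ + b * ⟪x, x⟫ := by
  rw [← real_inner_self_eq_norm_sq, hJ, hJ2, inner_add_right, real_inner_smul_right,
    real_inner_smul_right, real_inner_comm (J x)]

theorem IsSymmetric.inner_starProjection_apply_comm {J : V →ₗ[ℝ] V} (hJ : J.IsSymmetric)
    (K : Submodule ℝ V) [K.HasOrthogonalProjection] {x y : V} (hx : x ∈ K) (hy : y ∈ K) :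
    ⟪K.starProjection (J x), y⟫ = ⟪K.starProjection (J y), x⟫ := by
  rw [K.inner_starProjection_left_of_mem hy, hJ, K.inner_starProjection_left_of_mem hx,
    real_inner_comm]

theorem inner_apply_apply_eq_of_diag {S : V →ₗ[ℝ] V} {D : Submodule ℝ V}
    (hS : ∀ x ∈ D, ∀ y ∈ D, ⟪S x, y⟫ = ⟪S y, x⟫) {a b : ℝ}
    (hdiag : ∀ x ∈ D, ⟪S x, S x⟫ = a * ⟪S x, x⟫ + b * ⟪x, x⟫) :
    ∀ x ∈ D, ∀ y ∈ D, ⟪S x, S y⟫ = a * ⟪S x, y⟫ + b * ⟪x, y⟫ := by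
  let ι := D.subtype
  have key := BilinForm.ext_of_isSymm
    (B := (innerₗ V).compl₁₂ (S ∘ₗ ι) (S ∘ₗ ι))
    (C := a • (innerₗ V).compl₁₂ (S ∘ₗ ι) ι + b • (innerₗ V).compl₁₂ ι ι)
    ⟨fun x y => real_inner_comm _ _⟩
    ⟨fun x y => by simp [ι, hS x x.2 y y.2, real_inner_comm]⟩
    (fun x => by simpa [ι] using hdiag x x.2)
  intro x hx y hy
  simpa [ι] using congr_fun₂ key ⟨x, hx⟩ ⟨y, hy⟩

end LinearMap

end

theorem slant_inner_T_general {V : Type*} [NormedAddCommGroup V] [InnerProductSpace ℝ V]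
    [FiniteDimensional ℝ V]
    (p q : ℕ) (J : V →ₗ[ℝ] V)
    (hJ2 : ∀ x : V, J (J x) = (p : ℝ) • J x + (q : ℝ) • x)
    (hsym : ∀ x y : V, ⟪J x, y⟫ = ⟪x, J y⟫)
    (W : Submodule ℝ V)
    (T : V → V) (hT : ∀ x : V, T x = (W.orthogonalProjection (J x) : V))
    (D : Submodule ℝ V) (hD : D ≤ W) (θ : ℝ)
    (hslant : ∀ x ∈ D, ‖T x‖ ^ 2 = Real.cos θ ^ 2 * ‖J x‖ ^ 2) :
    ∀ x ∈ D, ∀ y ∈ D,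
      ⟪T x, T y⟫ = Real.cos θ ^ 2 * ((p : ℝ) * ⟪T x, y⟫ + (q : ℝ) * ⟪x, y⟫) := by
  let S : V →ₗ[ℝ] V := W.starProjection.toLinearMap ∘ₗ J
  obtain rfl : T = S := funext hT
  have hS_symm : ∀ x ∈ D, ∀ y ∈ D, ⟪S x, y⟫ = ⟪S y, x⟫ := fun x hx y hy =>
    LinearMap.IsSymmetric.inner_starProjection_apply_comm hsym W (hD hx) (hD hy)
  have hdiag : ∀ x ∈ D, ⟪S x, S x⟫ =
      (Real.cos θ ^ 2 * p) * ⟪S x, x⟫ + (Real.cos θ ^ 2 * q) * ⟪x, x⟫ := by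
    intro x hx
    have hSJ : ⟪S x, x⟫ = ⟪J x, x⟫ := W.inner_starProjection_left_of_mem (hD hx) (J x)
    rw [real_inner_self_eq_norm_sq, hslant x hx,
      LinearMap.IsSymmetric.norm_apply_sq_eq_of_apply_apply_eq hsym hJ2, hSJ]
    ring
  intro x hx y hy
  rw [LinearMap.inner_apply_apply_eq_of_diag hS_symm hdiag x hx y hy]
  ring

/-- For a slant subspace `D ⊆ W` with slant angle `θ`
(`‖T x‖² = cos²θ · ‖J x‖²` on `D`), one has
`⟪T x, T y⟫ = cos²θ · (p·⟪T x, y⟫ + q·⟪x, y⟫)` for all `x, y ∈ D`. -/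
theorem slant_inner_T {V : Type*} [NormedAddCommGroup V] [InnerProductSpace ℝ V]
    [FiniteDimensional ℝ V]
    (p q : ℕ) (hp : 0 < p) (hq : 0 < q) (J : V →ₗ[ℝ] V)
    (hJ2 : ∀ x : V, J (J x) = (p : ℝ) • J x + (q : ℝ) • x)
    (hsym : ∀ x y : V, ⟪J x, y⟫ = ⟪x, J y⟫)
    (W : Submodule ℝ V)
    (T : V → V) (hT : ∀ x : V, T x = (W.orthogonalProjection (J x) : V))
    (D : Submodule ℝ V) (hD : D ≤ W) (θ : ℝ)
    (hslant : ∀ x ∈ D, ‖T x‖ ^ 2 = Real.cos θ ^ 2 * ‖J x‖ ^ 2) :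
    ∀ x ∈ D, ∀ y ∈ D,
      ⟪T x, T y⟫ = Real.cos θ ^ 2 * ((p : ℝ) * ⟪T x, y⟫ + (q : ℝ) * ⟪x, y⟫) :=
  slant_inner_T_general p q J hJ2 hsym W T hT D hD θ hslant
end

section
/- Let V be a finite-dimensional real inner product space, p and q positive integers, and J : V → V a linear map with J² = p·J + q·id that is self-adjoint: ⟨J x, y⟩ = ⟨x, J y⟩ for all x, y ∈ V. Let W ⊆ V be a subspace with orthogonal projection P, set T x = P(J x), and let D ⊆ W be a subspace with T(D) ⊆ D that is slant with angle θ, i.e. ‖T x‖² = cos²θ · ‖J x‖² for every x ∈ D. Then T² = cos²θ · (p·T + q·id) on D, i.e. T(T x) = cos²θ · ( p·T x + q·x ) for every x ∈ D. -/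
/-!
On `D` the map `T = P ∘ J` is a symmetric operator `S` (since `D ⊆ W` and `P`, `J` are
symmetric), and `⟪S y, y⟫ = ⟪J y, y⟫` there. Expanding `‖J y‖² = ⟪J² y, y⟫` with the metallic
relation turns the slant condition into `⟪(S² - cos²θ (p S + q)) y, y⟫ = 0` for all `y ∈ D`; a
symmetric operator whose quadratic form vanishes is zero.
-/

open RealInnerProductSpace

section

variable {𝕜 E : Type*} [RCLike 𝕜] [NormedAddCommGroup E] [InnerProductSpace 𝕜 E]
  {W : Submodule 𝕜 E} [W.HasOrthogonalProjection]

theorem Submodule.inner_starProjection_left_of_mem_s15 (z : E) {y : E} (hy : y ∈ W) :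
    inner 𝕜 (W.starProjection z) y = inner 𝕜 z y := by
  rw [Submodule.inner_starProjection_left_eq_right, W.starProjection_eq_self_iff.mpr hy]

theorem LinearMap.IsSymmetric.restrict_starProjection_comp {J : E →ₗ[𝕜] E} (hJ : J.IsSymmetric)
    {D : Submodule 𝕜 E} (hD : D ≤ W) (hDJ : ∀ x ∈ D, (W.starProjection.toLinearMap ∘ₗ J) x ∈ D) :
    ((W.starProjection.toLinearMap ∘ₗ J).restrict hDJ).IsSymmetric := by
  intro u v
  change inner 𝕜 (W.starProjection (J u)) (v : E) = inner 𝕜 (u : E) (W.starProjection (J v))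
  rw [Submodule.inner_starProjection_left_of_mem_s15 _ (hD v.2), hJ,
    ← Submodule.inner_starProjection_left_eq_right, W.starProjection_eq_self_iff.mpr (hD u.2)]

end

namespace LinearMap.IsSymmetric

variable {E : Type*} [NormedAddCommGroup E] [InnerProductSpace ℝ E] {S : E →ₗ[ℝ] E}

theorem norm_apply_sq_of_apply_apply (hS : S.IsSymmetric) {a b : ℝ}
    (hS2 : ∀ x, S (S x) = a • S x + b • x) (x : E) :
    ‖S x‖ ^ 2 = a * ⟪S x, x⟫ + b * ‖x‖ ^ 2 := by
  rw [← real_inner_self_eq_norm_sq, ← real_inner_self_eq_norm_sq, hS, real_inner_comm, hS2,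
    inner_add_left, real_inner_smul_left, real_inner_smul_left]

theorem apply_apply_of_norm_apply_sq (hS : S.IsSymmetric) {a b : ℝ}
    (h : ∀ y, ‖S y‖ ^ 2 = a * ⟪S y, y⟫ + b * ‖y‖ ^ 2) (x : E) :
    S (S x) = a • S x + b • x := by
  set R := S ∘ₗ S - (a • S + b • LinearMap.id)
  have hR : R.IsSymmetric :=
    ((hS.pow 2).sub ((hS.smul (by simp)).add (LinearMap.IsSymmetric.id.smul (by simp))))
  have hR0 : R = 0 := hR.inner_map_self_eq_zero.mp fun y => by
    simp [R, inner_sub_left, inner_add_left, real_inner_smul_left, hS (S y), h y]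
  simpa [R, sub_eq_zero] using LinearMap.congr_fun hR0 x

end LinearMap.IsSymmetric

theorem slant_T_squared_general {V : Type*} [NormedAddCommGroup V] [InnerProductSpace ℝ V]
    [FiniteDimensional ℝ V]
    (p q : ℕ) (J : V →ₗ[ℝ] V)
    (hJ2 : ∀ x : V, J (J x) = (p : ℝ) • J x + (q : ℝ) • x)
    (hsym : ∀ x y : V, ⟪J x, y⟫ = ⟪x, J y⟫)
    (W : Submodule ℝ V)
    (T : V → V) (hT : ∀ x : V, T x = (W.orthogonalProjection (J x) : V))
    (D : Submodule ℝ V) (hD : D ≤ W)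
    (hTD : ∀ x ∈ D, T x ∈ D) (θ : ℝ)
    (hslant : ∀ x ∈ D, ‖T x‖ ^ 2 = Real.cos θ ^ 2 * ‖J x‖ ^ 2) :
    ∀ x ∈ D, T (T x) = Real.cos θ ^ 2 • ((p : ℝ) • T x + (q : ℝ) • x) := by
  obtain rfl : T = W.starProjection.toLinearMap ∘ₗ J := funext fun x => hT x
  simp only [LinearMap.comp_apply, ContinuousLinearMap.coe_coe] at hslant
  intro x hx
  have hS := LinearMap.IsSymmetric.restrict_starProjection_comp hsym hD hTD
  have hquad (y : D) : ‖W.starProjection (J y)‖ ^ 2 =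
      Real.cos θ ^ 2 * p * ⟪W.starProjection (J y), y⟫ + Real.cos θ ^ 2 * q * ‖(y : V)‖ ^ 2 := by
    rw [hslant y y.2, LinearMap.IsSymmetric.norm_apply_sq_of_apply_apply hsym hJ2,
      Submodule.inner_starProjection_left_of_mem_s15 _ (hD y.2)]
    ring
  have key := congrArg Subtype.val (hS.apply_apply_of_norm_apply_sq hquad ⟨x, hx⟩)
  simpa [smul_add, smul_smul] using key

/-- For a slant subspace `D ⊆ W` with slant angle `θ` that is invariant under
`T` (`T(D) ⊆ D`), one has `T² = cos²θ · (p·T + q·id)` on `D`. -/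
theorem slant_T_squared {V : Type*} [NormedAddCommGroup V] [InnerProductSpace ℝ V]
    [FiniteDimensional ℝ V]
    (p q : ℕ) (hp : 0 < p) (hq : 0 < q) (J : V →ₗ[ℝ] V)
    (hJ2 : ∀ x : V, J (J x) = (p : ℝ) • J x + (q : ℝ) • x)
    (hsym : ∀ x y : V, ⟪J x, y⟫ = ⟪x, J y⟫)
    (W : Submodule ℝ V)
    (T : V → V) (hT : ∀ x : V, T x = (W.orthogonalProjection (J x) : V))
    (D : Submodule ℝ V) (hD : D ≤ W)
    (hTD : ∀ x ∈ D, T x ∈ D) (θ : ℝ)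
    (hslant : ∀ x ∈ D, ‖T x‖ ^ 2 = Real.cos θ ^ 2 * ‖J x‖ ^ 2) :
    ∀ x ∈ D, T (T x) = Real.cos θ ^ 2 • ((p : ℝ) • T x + (q : ℝ) • x) :=
  slant_T_squared_general p q J hJ2 hsym W T hT D hD hTD θ hslant
end
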